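/- Let z > 0 and let p, q > 1 be real with 1/p + 1/q = 1. Then for all real x and y, the Turán-type inequality K_{x/p + y/q}(z) ≤ K_x(z)^{1/p} · K_y(z)^{1/q} holds. -/

import Mathlib

/-- The modified Bessel function of the second kind,
`K_ν(z) = (1/2) ∫_0^∞ t^{ν-1} exp(-z(t + 1/t)/2) dt`. -/
noncomputable def besselK (ν z : ℝ) : ℝ :=
  (1 / 2) * ∫ t in Set.Ioi (0 : ℝ), t ^ (ν - 1) * Real.exp (-z * (t + 1 / t) / 2)

/-!
The integrand `t ^ (ν - 1) * exp (-z (t + 1/t) / 2)` is, for fixed `t > 0`, an exponential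
function of `ν`, so its value at `x / p + y / q` is the product of its values at `x` and `y`
raised to the powers `1 / p` and `1 / q`. Hölder's inequality for the exponents `p, q` then
says that `ν ↦ K_ν(z)` is log-convex, which is the claim. Integrability for every `ν` comes from
`exp (-z / (2t)) ≤ n! (2 / z)^n t^n`, which absorbs the singularity of `t ^ (ν - 1)` at `0`.
-/

open MeasureTheory Real Set

section Holder

variable {α : Type*} [MeasurableSpace α] {μ : Measure α}

theorem rpow_one_div_rpow_ae_eq {r : ℝ} (hr : r ≠ 0) {h : α → ℝ} (h0 : 0 ≤ᵐ[μ] h) :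
    (fun a => (h a ^ (1 / r)) ^ r) =ᵐ[μ] h := by
  filter_upwards [h0] with a ha
  rw [← rpow_mul ha, one_div_mul_cancel hr, rpow_one]

theorem MeasureTheory.Integrable.memLp_rpow_one_div {r : ℝ} (hr : 0 < r) {h : α → ℝ}
    (h0 : 0 ≤ᵐ[μ] h) (hh : Integrable h μ) :
    MemLp (fun a => h a ^ (1 / r)) (ENNReal.ofReal r) μ := by
  have hmeas : AEStronglyMeasurable (fun a => h a ^ (1 / r)) μ :=
    (hh.aemeasurable.pow_const _).aestronglyMeasurable
  rw [← integrable_norm_rpow_iff hmeas (by simpa using hr) ENNReal.ofReal_ne_top,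
    ENNReal.toReal_ofReal hr.le]
  refine hh.congr ?_
  filter_upwards [rpow_one_div_rpow_ae_eq hr.ne' h0, h0] with a ha ha0
  rw [norm_of_nonneg (rpow_nonneg ha0 _), ha]

theorem integral_rpow_mul_rpow_le {p q : ℝ} (hpq : p.HolderConjugate q) {f g : α → ℝ}
    (hf0 : 0 ≤ᵐ[μ] f) (hg0 : 0 ≤ᵐ[μ] g) (hf : Integrable f μ) (hg : Integrable g μ) :
    ∫ a, f a ^ (1 / p) * g a ^ (1 / q) ∂μ ≤
      (∫ a, f a ∂μ) ^ (1 / p) * (∫ a, g a ∂μ) ^ (1 / q) := by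
  have holder := integral_mul_le_Lp_mul_Lq_of_nonneg hpq
    (by filter_upwards [hf0] with a ha using rpow_nonneg ha _)
    (by filter_upwards [hg0] with a ha using rpow_nonneg ha _)
    (hf.memLp_rpow_one_div hpq.pos hf0) (hg.memLp_rpow_one_div hpq.symm.pos hg0)
  rwa [integral_congr_ae (rpow_one_div_rpow_ae_eq hpq.ne_zero hf0),
    integral_congr_ae (rpow_one_div_rpow_ae_eq hpq.symm.ne_zero hg0)] at holder

end Holder

theorem exp_neg_le_factorial_div_pow {s : ℝ} (hs : 0 < s) (n : ℕ) :
    exp (-s) ≤ n.factorial / s ^ n := by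
  rw [exp_neg, ← inv_div]
  exact inv_anti₀ (by positivity) (pow_div_factorial_le_exp s hs.le n)

noncomputable def besselKIntegrand (ν z t : ℝ) : ℝ :=
  t ^ (ν - 1) * exp (-z * (t + 1 / t) / 2)

theorem besselK_eq (ν z : ℝ) :
    besselK ν z = 1 / 2 * ∫ t in Ioi 0, besselKIntegrand ν z t :=
  rfl

theorem besselKIntegrand_pos (ν z : ℝ) {t : ℝ} (ht : 0 < t) : 0 < besselKIntegrand ν z t := by
  unfold besselKIntegrand
  positivity

theorem continuousOn_besselKIntegrand (ν z : ℝ) :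
    ContinuousOn (besselKIntegrand ν z) (Ioi 0) := by
  intro t (ht : 0 < t)
  have ht0 : t ≠ 0 := ht.ne'
  exact ContinuousAt.continuousWithinAt
    (by unfold besselKIntegrand; fun_prop (disch := simp [ht0]))

theorem besselKIntegrand_rpow_mul_rpow {a b : ℝ} (hab : a + b = 1) (x y z : ℝ) {t : ℝ}
    (ht : 0 < t) :
    besselKIntegrand x z t ^ a * besselKIntegrand y z t ^ b =
      besselKIntegrand (a * x + b * y) z t := by
  unfold besselKIntegrand
  have hE := exp_pos (-z * (t + 1 / t) / 2)
  rw [mul_rpow (by positivity) hE.le, mul_rpow (by positivity) hE.le, ← rpow_mul ht.le,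
    ← rpow_mul ht.le, mul_mul_mul_comm, ← rpow_add ht, ← rpow_add hE, hab, rpow_one]
  congr 2
  linear_combination (-1) * hab

theorem besselKIntegrand_le (ν : ℝ) {z t : ℝ} (hz : 0 < z) (ht : 0 < t) (n : ℕ) :
    besselKIntegrand ν z t ≤
      n.factorial * (2 / z) ^ n * (t ^ (ν - 1 + n) * exp (-(z / 2) * t)) := by
  have hsplit : exp (-z * (t + 1 / t) / 2) = exp (-(z / 2) * t) * exp (-(z / (2 * t))) := by
    rw [← exp_add]
    ring_nf
  have hbound : exp (-(z / (2 * t))) ≤ n.factorial * (2 / z) ^ n * t ^ n := by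
    refine (exp_neg_le_factorial_div_pow (by positivity) n).trans_eq ?_
    rw [div_eq_mul_inv, ← inv_pow, inv_div]
    ring
  calc besselKIntegrand ν z t
      = t ^ (ν - 1) * exp (-(z / 2) * t) * exp (-(z / (2 * t))) := by
        rw [besselKIntegrand, hsplit, mul_assoc]
    _ ≤ t ^ (ν - 1) * exp (-(z / 2) * t) * (n.factorial * (2 / z) ^ n * t ^ n) := by
        gcongr
    _ = n.factorial * (2 / z) ^ n * (t ^ (ν - 1 + n) * exp (-(z / 2) * t)) := by
        rw [rpow_add ht, rpow_natCast]
        ring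

theorem integrableOn_besselKIntegrand (ν : ℝ) {z : ℝ} (hz : 0 < z) :
    IntegrableOn (besselKIntegrand ν z) (Ioi 0) := by
  obtain ⟨n, hn⟩ := exists_nat_gt (-ν)
  have hdom : IntegrableOn
      (fun t => n.factorial * (2 / z) ^ n * (t ^ (ν - 1 + n) * exp (-(z / 2) * t))) (Ioi 0) := by
    have h := integrableOn_rpow_mul_exp_neg_mul_rpow (by linarith : -1 < ν - 1 + n) one_pos
      (by positivity : 0 < z / 2)
    simp only [rpow_one] at h
    exact h.const_mul _
  refine hdom.mono' ((continuousOn_besselKIntegrand ν z).aestronglyMeasurable measurableSet_Ioi)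
    (ae_restrict_of_forall_mem measurableSet_Ioi fun t (ht : 0 < t) => ?_)
  rw [norm_of_nonneg (besselKIntegrand_pos ν z ht).le]
  exact besselKIntegrand_le ν hz ht n

theorem stmt_17_general (z : ℝ) (hz : 0 < z) (p q : ℝ) (hp : 1 < p)
    (hpq : 1 / p + 1 / q = 1) (x y : ℝ) :
    besselK (x / p + y / q) z ≤ besselK x z ^ (1 / p) * besselK y z ^ (1 / q) := by
  have hconj : p.HolderConjugate q :=
    Real.holderConjugate_iff.mpr ⟨hp, by simpa only [one_div] using hpq⟩
  have hpos (ν : ℝ) : 0 ≤ᵐ[volume.restrict (Ioi 0)] besselKIntegrand ν z :=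
    ae_restrict_of_forall_mem measurableSet_Ioi fun t ht => (besselKIntegrand_pos ν z ht).le
  have hint (ν : ℝ) : 0 ≤ ∫ t in Ioi 0, besselKIntegrand ν z t := integral_nonneg_of_ae (hpos ν)
  have hmix : ∫ t in Ioi 0, besselKIntegrand (x / p + y / q) z t =
      ∫ t in Ioi 0, besselKIntegrand x z t ^ (1 / p) * besselKIntegrand y z t ^ (1 / q) := by
    refine setIntegral_congr_fun measurableSet_Ioi fun t ht => ?_
    rw [besselKIntegrand_rpow_mul_rpow hpq x y z ht, one_div_mul_eq_div, one_div_mul_eq_div]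
  have holder := integral_rpow_mul_rpow_le hconj (hpos x) (hpos y)
    (integrableOn_besselKIntegrand x hz) (integrableOn_besselKIntegrand y hz)
  have half : (1 / 2 : ℝ) = (1 / 2) ^ (1 / p) * (1 / 2) ^ (1 / q) := by
    rw [← rpow_add (by norm_num), hpq, rpow_one]
  rw [besselK_eq, besselK_eq, besselK_eq, hmix, mul_rpow (by norm_num) (hint x),
    mul_rpow (by norm_num) (hint y), mul_mul_mul_comm, ← half]
  exact mul_le_mul_of_nonneg_left holder (by norm_num)

theorem stmt_17 (z : ℝ) (hz : 0 < z) (p q : ℝ) (hp : 1 < p) (hq : 1 < q)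
    (hpq : 1 / p + 1 / q = 1) (x y : ℝ) :
    besselK (x / p + y / q) z ≤ besselK x z ^ (1 / p) * besselK y z ^ (1 / q) :=
  stmt_17_general z hz p q hp hpq x y
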